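/- Suppose the image of a bicontrolled homomorphism between Γ-filtered modules is the kernel K of a bicontrolled quotient map F₁ → F, with F₁ lean and insular, and give F the quotient filtration F(S) = F₁(S)/(K ∩ F₁(S)). Then F is lean and insular. -/

import Mathlib

open Metric Set

/-- The closed metric `r`-enlargement of a subset `S` of a metric space. -/
def enl {X : Type*} [PseudoMetricSpace X] (S : Set X) (r : ℝ) : Set X :=
  {x | ∃ s ∈ S, dist x s ≤ r}

section Defs

variable {X : Type*} [PseudoMetricSpace X] (R : Type*) [Ring R]

/-- An `X`-filtered `R`-module structure on `M`: a monotone assignment of submodules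
with `F ∅ = ⊥` and `F X` being the whole module. -/
def IsXFilteredModule {M : Type*} [AddCommGroup M] [Module R M]
    (F : Set X → Submodule R M) : Prop :=
  Monotone F ∧ F ∅ = ⊥ ∧ F Set.univ = ⊤

/-- `F` is `D`-lean: `F(S) ⊆ ∑_{x ∈ S} F(x[D])` for every `S ⊆ X`. -/
def IsLean {M : Type*} [AddCommGroup M] [Module R M]
    (F : Set X → Submodule R M) (D : ℝ) : Prop :=
  ∀ S : Set X, F S ≤ ⨆ x ∈ S, F (closedBall x D)

/-- `F` is `δ`-scattered: `F(X) ⊆ ∑_{x ∈ X} F(x[δ])`. -/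
def IsScattered {M : Type*} [AddCommGroup M] [Module R M]
    (F : Set X → Submodule R M) (δ : ℝ) : Prop :=
  F Set.univ ≤ ⨆ x : X, F (closedBall x δ)

/-- `F` is `d`-insular: `F(S) ∩ F(U) ⊆ F(S[d] ∩ U[d])` for all `S, U ⊆ X`. -/
def IsInsular {M : Type*} [AddCommGroup M] [Module R M]
    (F : Set X → Submodule R M) (d : ℝ) : Prop :=
  ∀ S U : Set X, F S ⊓ F U ≤ F (enl S d ∩ enl U d)

/-- `F` is locally finitely generated: `F(T)` is a finitely generated `R`-module
for every bounded `T ⊆ X`. -/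
def IsLocallyFG {M : Type*} [AddCommGroup M] [Module R M]
    (F : Set X → Submodule R M) : Prop :=
  ∀ T : Set X, Bornology.IsBounded T → (F T).FG

/-- `f` is `b`-bicontrolled: `f(F(S)) ⊆ G(S[b])` and `f(F(X)) ∩ G(S) ⊆ f(F(S[b]))`
for all `S ⊆ X`. -/
def IsBicontrolled {M N : Type*} [AddCommGroup M] [Module R M]
    [AddCommGroup N] [Module R N]
    (F : Set X → Submodule R M) (G : Set X → Submodule R N)
    (f : M →ₗ[R] N) (b : ℝ) : Prop :=
  (∀ S : Set X, (F S).map f ≤ G (enl S b)) ∧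
  (∀ S : Set X, (F Set.univ).map f ⊓ G S ≤ (F (enl S b)).map f)

end Defs

/-!
Leanness passes to any image filtration. For insularity, two lifts `a ∈ E₁(S)`, `a' ∈ E₁(U)`
of the same element of `M` differ by an element of the kernel filtration over `S ∪ U`. The
kernel is lean, being the bicontrolled image of the lean `E₂`, so `a - a' = k + k'` with `k`
near `S` and `k'` near `U`; then `a - k = a' + k'` is a lift lying in `E₁` of both
enlargements, where insularity of `E₁` applies.
-/

section Enlargement

variable {X : Type*} [PseudoMetricSpace X]

lemma subset_enl (S : Set X) {r : ℝ} (hr : 0 ≤ r) : S ⊆ enl S r :=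
  fun x hx => ⟨x, hx, by simpa using hr⟩

lemma enl_enl (S : Set X) (r s : ℝ) : enl (enl S r) s ⊆ enl S (r + s) := by
  rintro x ⟨y, ⟨z, hz, hyz⟩, hxy⟩
  exact ⟨z, hz, by linarith [dist_triangle x y z]⟩

lemma closedBall_subset_enl {S : Set X} {x : X} (hx : x ∈ S) (r : ℝ) :
    closedBall x r ⊆ enl S r :=
  fun _ hy => ⟨x, hx, hy⟩

lemma enl_closedBall_subset_closedBall {x y : X} {b : ℝ} (hxy : dist x y ≤ b) (r : ℝ) :
    enl (closedBall x r) b ⊆ closedBall y (r + 2 * b) := by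
  rintro z ⟨w, hw, hzw⟩
  rw [mem_closedBall] at hw ⊢
  linarith [dist_triangle z w y, dist_triangle w x y]

end Enlargement

section Filtration

variable {X : Type*} [PseudoMetricSpace X] {R : Type*} [Ring R]
  {M N : Type*} [AddCommGroup M] [Module R M] [AddCommGroup N] [Module R N]

lemma IsLean.map {F : Set X → Submodule R M} {D : ℝ} (hF : IsLean R F D) (f : M →ₗ[R] N) :
    IsLean R (fun S => (F S).map f) D := fun S =>
  calc (F S).map f ≤ (⨆ x ∈ S, F (closedBall x D)).map f := Submodule.map_mono (hF S)
    _ = ⨆ x ∈ S, (F (closedBall x D)).map f := by simp only [Submodule.map_iSup]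

lemma IsLean.le_enl_sup_enl {F : Set X → Submodule R M} {D : ℝ} (hF : IsLean R F D)
    (hmono : Monotone F) (S U : Set X) : F (S ∪ U) ≤ F (enl S D) ⊔ F (enl U D) :=
  (hF _).trans <| iSup₂_le fun _ hx => hx.elim
    (fun h => le_sup_of_le_left (hmono (closedBall_subset_enl h D)))
    (fun h => le_sup_of_le_right (hmono (closedBall_subset_enl h D)))

lemma isLean_range_inf_of_isBicontrolled {E₂ : Set X → Submodule R N} {E₁ : Set X → Submodule R M}
    {f : N →ₗ[R] M} {b D : ℝ} (hE₁ : Monotone E₁) (htop : E₂ univ = ⊤)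
    (hf : IsBicontrolled R E₂ E₁ f b) (hlean : IsLean R E₂ D) :
    IsLean R (fun S => LinearMap.range f ⊓ E₁ S) (D + 2 * b) := fun S =>
  calc LinearMap.range f ⊓ E₁ S ≤ (E₂ (enl S b)).map f := by
        simpa only [htop, Submodule.map_top] using hf.2 S
    _ ≤ ⨆ x ∈ enl S b, (E₂ (closedBall x D)).map f := hlean.map f _
    _ ≤ ⨆ s ∈ S, LinearMap.range f ⊓ E₁ (closedBall s (D + 2 * b)) := by
        refine iSup₂_le fun x ⟨s, hs, hxs⟩ => le_iSup₂_of_le s hs (le_inf ?_ ?_)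
        · exact LinearMap.map_le_range
        · exact (hf.1 _).trans (hE₁ (enl_closedBall_subset_closedBall hxs D))

lemma IsInsular.map_of_isLean_ker {E : Set X → Submodule R M} {p : M →ₗ[R] N} {d D : ℝ}
    (hins : IsInsular R E d) (hmono : Monotone E) (hD : 0 ≤ D)
    (hK : IsLean R (fun S => LinearMap.ker p ⊓ E S) D) :
    IsInsular R (fun S => (E S).map p) (D + d) := by
  rintro S U m ⟨⟨a, ha, rfl⟩, ⟨a', ha', hpa'⟩⟩
  have hdiff : a - a' ∈ LinearMap.ker p ⊓ E (S ∪ U) :=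
    ⟨by simp [hpa'], sub_mem (hmono subset_union_left ha) (hmono subset_union_right ha')⟩
  have hKmono : Monotone fun S => LinearMap.ker p ⊓ E S :=
    fun _ _ h => inf_le_inf_left _ (hmono h)
  obtain ⟨k, hk, k', hk', hsum⟩ := Submodule.mem_sup.1 (hK.le_enl_sup_enl hKmono S U hdiff)
  have hS : a - k ∈ E (enl S D) := sub_mem (hmono (subset_enl S hD) ha) hk.2
  have hU : a - k ∈ E (enl U D) := by
    have hlift : a - k = a' + k' :=
      calc a - k = a' + (a - a' - k) := by abel
        _ = a' + k' := by rw [← hsum]; abel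
    rw [hlift]
    exact add_mem (hmono (subset_enl U hD) ha') hk'.2
  refine ⟨a - k, hmono (inter_subset_inter (enl_enl S D d) (enl_enl U D d)) (hins _ _ ⟨hS, hU⟩), ?_⟩
  simp [LinearMap.mem_ker.1 hk.1]

end Filtration

theorem quotient_filtration_lean_insular_general {X : Type*} [PseudoMetricSpace X]
    (R : Type*) [Ring R]
    {M₂ M₁ M : Type*} [AddCommGroup M₂] [Module R M₂] [AddCommGroup M₁] [Module R M₁]
    [AddCommGroup M] [Module R M]
    (E₂ : Set X → Submodule R M₂) (E₁ : Set X → Submodule R M₁)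
    (d : M₂ →ₗ[R] M₁) (p : M₁ →ₗ[R] M)
    (hE₂ : IsXFilteredModule R E₂) (hE₁ : IsXFilteredModule R E₁)
    (hexact : LinearMap.range d = LinearMap.ker p)
    (b : ℝ) (hb : 0 ≤ b)
    (hd : IsBicontrolled R E₂ E₁ d b)
    (D₁ D₂ d₁ : ℝ) (hD₁ : 0 ≤ D₁) (hD₂ : 0 ≤ D₂) (hd₁ : 0 ≤ d₁)
    (hlean₁ : IsLean R E₁ D₁) (hins₁ : IsInsular R E₁ d₁)
    (hlean₂ : IsLean R E₂ D₂) :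
    (∃ D, 0 ≤ D ∧ IsLean R (fun S => (E₁ S).map p) D) ∧
    (∃ d', 0 ≤ d' ∧ IsInsular R (fun S => (E₁ S).map p) d') := by
  have hK : IsLean R (fun S => LinearMap.ker p ⊓ E₁ S) (D₂ + 2 * b) :=
    hexact ▸ isLean_range_inf_of_isBicontrolled hE₁.1 hE₂.2.2 hd hlean₂
  exact ⟨⟨D₁, hD₁, hlean₁.map p⟩,
    ⟨D₂ + 2 * b + d₁, by linarith, hins₁.map_of_isLean_ker hE₁.1 (by linarith) hK⟩⟩

/-- given an exact sequence `F₂ → F₁ → F → 0` of `X`-filtered modules with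
both maps bicontrolled and `F₁`, `F₂` lean and insular (so the kernel
`K = im(F₂ → F₁) = ker(F₁ → F)` is the bicontrolled image of the lean module `F₂`),
the quotient `F` with the quotient filtration `F(S) = F₁(S)/(K ∩ F₁(S))`, i.e. the
image filtration `S ↦ p(E₁(S))`, is lean and insular. -/
theorem quotient_filtration_lean_insular {X : Type*} [PseudoMetricSpace X]
    (R : Type*) [Ring R]
    {M₂ M₁ M : Type*} [AddCommGroup M₂] [Module R M₂] [AddCommGroup M₁] [Module R M₁]
    [AddCommGroup M] [Module R M]
    (E₂ : Set X → Submodule R M₂) (E₁ : Set X → Submodule R M₁)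
    (d : M₂ →ₗ[R] M₁) (p : M₁ →ₗ[R] M)
    (hE₂ : IsXFilteredModule R E₂) (hE₁ : IsXFilteredModule R E₁)
    (hsurj : Function.Surjective p)
    (hexact : LinearMap.range d = LinearMap.ker p)
    (b : ℝ) (hb : 0 ≤ b)
    (hd : IsBicontrolled R E₂ E₁ d b)
    (hp : IsBicontrolled R E₁ (fun S => (E₁ S).map p) p b)
    (D₁ D₂ d₁ d₂ : ℝ) (hD₁ : 0 ≤ D₁) (hD₂ : 0 ≤ D₂) (hd₁ : 0 ≤ d₁) (hd₂ : 0 ≤ d₂)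
    (hlean₁ : IsLean R E₁ D₁) (hins₁ : IsInsular R E₁ d₁)
    (hlean₂ : IsLean R E₂ D₂) (hins₂ : IsInsular R E₂ d₂) :
    (∃ D, 0 ≤ D ∧ IsLean R (fun S => (E₁ S).map p) D) ∧
    (∃ d', 0 ≤ d' ∧ IsInsular R (fun S => (E₁ S).map p) d') :=
  quotient_filtration_lean_insular_general R E₂ E₁ d p hE₂ hE₁ hexact b hb hd D₁ D₂ d₁ hD₁ hD₂ hd₁
    hlean₁ hins₁ hlean₂
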